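/- arXiv:math/0101108 — 3 statements merged into one kernel-verified Lean document; each statement's English description precedes it below -/
import Mathlib

section
/- Let H be a finitely generated abelian group and h ∈ H an element of infinite order. Then h − 1 is a non-zerodivisor in the group ring ℤ[H]. -/
/-!
If `(g - 1) x = 0` in `k[G]`, the coefficient function of `x` is invariant under translation
by `g`, so its support is a finite set stable under translation by `g`. A nonempty such set
forces `g` to have finite order.
-/

theorem Set.Finite.isOfFinOrder_of_mapsTo_mul_right {G : Type*} [Group G] {s : Set G}
    (hs : s.Finite) (hne : s.Nonempty) {g : G} (hg : Set.MapsTo (· * g) s s) :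
    IsOfFinOrder g := by
  obtain ⟨a, ha⟩ := hne
  by_contra hfin
  have hinj : Function.Injective fun n : ℕ ↦ a * g ^ n :=
    (mul_right_injective a).comp (injective_pow_iff_not_isOfFinOrder.mpr hfin)
  refine Set.infinite_of_injective_forall_mem hinj (fun n ↦ ?_) hs
  simpa only [mul_right_iterate_apply] using hg.iterate n ha

theorem Set.Finite.isOfFinOrder_of_mapsTo_mul_left {G : Type*} [Group G] {s : Set G}
    (hs : s.Finite) (hne : s.Nonempty) {g : G} (hg : Set.MapsTo (g * ·) s s) :
    IsOfFinOrder g := by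
  rw [← isOfFinOrder_inv_iff]
  refine hs.inv.isOfFinOrder_of_mapsTo_mul_right hne.inv fun b hb ↦ ?_
  simpa only [Set.mem_inv, mul_inv_rev, inv_inv] using hg hb

namespace MonoidAlgebra

variable {k G : Type*} [Group G] {g : G}

theorem support_coeff_nonempty [Semiring k] {x : k[G]} (hx : x ≠ 0) :
    (x.coeff.support : Set G).Nonempty := by
  simpa only [Finset.coe_nonempty, Finsupp.support_nonempty_iff, ne_eq, coeff_eq_zero] using hx

theorem eq_zero_of_mul_of_eq_self [Semiring k] (hg : ¬IsOfFinOrder g) {x : k[G]}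
    (hx : x * of k G g = x) : x = 0 := by
  have hcoeff (b : G) : x.coeff (b * g⁻¹) = x.coeff b := by
    simpa only [of_apply, coeff_mul_single_apply, mul_one] using congr_arg (coeff · b) hx
  have hmaps : Set.MapsTo (· * g⁻¹) x.coeff.support x.coeff.support := fun b hb ↦ by
    simpa only [Finset.mem_coe, Finsupp.mem_support_iff, hcoeff] using hb
  by_contra hx0
  exact hg <| isOfFinOrder_inv_iff.mp <|
    x.coeff.support.finite_toSet.isOfFinOrder_of_mapsTo_mul_right (support_coeff_nonempty hx0) hmaps

theorem eq_zero_of_of_mul_eq_self [Semiring k] (hg : ¬IsOfFinOrder g) {x : k[G]}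
    (hx : of k G g * x = x) : x = 0 := by
  have hcoeff (b : G) : x.coeff (g⁻¹ * b) = x.coeff b := by
    simpa only [of_apply, coeff_single_mul_apply, one_mul] using congr_arg (coeff · b) hx
  have hmaps : Set.MapsTo (g⁻¹ * ·) x.coeff.support x.coeff.support := fun b hb ↦ by
    simpa only [Finset.mem_coe, Finsupp.mem_support_iff, hcoeff] using hb
  by_contra hx0
  exact hg <| isOfFinOrder_inv_iff.mp <|
    x.coeff.support.finite_toSet.isOfFinOrder_of_mapsTo_mul_left (support_coeff_nonempty hx0) hmaps

theorem of_sub_one_mem_nonZeroDivisors [Ring k] (hg : ¬IsOfFinOrder g) :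
    of k G g - 1 ∈ nonZeroDivisors k[G] := by
  refine mem_nonZeroDivisors_iff.mpr ⟨fun x hx ↦ ?_, fun x hx ↦ ?_⟩
  · exact eq_zero_of_of_mul_eq_self hg (by rwa [sub_mul, one_mul, sub_eq_zero] at hx)
  · exact eq_zero_of_mul_of_eq_self hg (by rwa [mul_sub, mul_one, sub_eq_zero] at hx)

end MonoidAlgebra

theorem sub_one_nonZeroDivisor_general {H : Type*} [CommGroup H]
    (h : H) (hh : ¬ IsOfFinOrder h) :
    (MonoidAlgebra.of ℤ H h - 1) ∈ nonZeroDivisors (MonoidAlgebra ℤ H) :=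
  MonoidAlgebra.of_sub_one_mem_nonZeroDivisors hh

/-- In the integral group ring of a finitely generated abelian group, `h - 1` is a
non-zerodivisor whenever `h` has infinite order. -/
theorem sub_one_nonZeroDivisor {H : Type*} [CommGroup H] [Group.FG H]
    (h : H) (hh : ¬ IsOfFinOrder h) :
    (MonoidAlgebra.of ℤ H h - 1) ∈ nonZeroDivisors (MonoidAlgebra ℤ H) :=
  sub_one_nonZeroDivisor_general h hh
end

section
/- Let H be an abelian group, R = ℤ[H], F a field, and φ : R → F a ring homomorphism. Let q be an element of the total quotient ring of R such that q·(h − 1) ∈ R for every h ∈ H. Then for any two elements h, h′ ∈ H with φ(h) ≠ 1 and φ(h′) ≠ 1, one has φ(q(h − 1)) · (φ(h′) − 1) = φ(q(h′ − 1)) · (φ(h) − 1). Consequently, if φ(H) ≠ 1, the value φ(q(h − 1))/(φ(h) − 1) is independent of the choice of h with φ(h) ≠ 1. -/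
/-- Well-definedness of the extension `φ_#`: if `q` lies in the total quotient ring of
`ℤ[H]` and `q * (h - 1) ∈ ℤ[H]` for all `h ∈ H`, then for any `h, h'` with
`φ(h) ≠ 1 ≠ φ(h')`, the representatives `r, r'` of `q(h-1)`, `q(h'-1)` satisfy
`φ(r) (φ(h') - 1) = φ(r') (φ(h) - 1)`, so `φ(q(h-1))/(φ(h)-1)` is independent of `h`. -/
theorem phi_sharp_well_defined {H : Type*} [CommGroup H] {F : Type*} [Field F]
    (φ : MonoidAlgebra ℤ H →+* F)
    (q : FractionRing (MonoidAlgebra ℤ H))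
    (hq : ∀ g : H, ∃ r : MonoidAlgebra ℤ H,
      algebraMap (MonoidAlgebra ℤ H) (FractionRing (MonoidAlgebra ℤ H)) r =
        q * algebraMap (MonoidAlgebra ℤ H) (FractionRing (MonoidAlgebra ℤ H))
          (MonoidAlgebra.of ℤ H g - 1))
    (h h' : H) (r r' : MonoidAlgebra ℤ H)
    (hr : algebraMap (MonoidAlgebra ℤ H) (FractionRing (MonoidAlgebra ℤ H)) r =
      q * algebraMap (MonoidAlgebra ℤ H) (FractionRing (MonoidAlgebra ℤ H))
        (MonoidAlgebra.of ℤ H h - 1))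
    (hr' : algebraMap (MonoidAlgebra ℤ H) (FractionRing (MonoidAlgebra ℤ H)) r' =
      q * algebraMap (MonoidAlgebra ℤ H) (FractionRing (MonoidAlgebra ℤ H))
        (MonoidAlgebra.of ℤ H h' - 1))
    (hφh : φ (MonoidAlgebra.of ℤ H h) ≠ 1)
    (hφh' : φ (MonoidAlgebra.of ℤ H h') ≠ 1) :
    φ r * (φ (MonoidAlgebra.of ℤ H h') - 1) = φ r' * (φ (MonoidAlgebra.of ℤ H h) - 1) := by
  have key : r * (MonoidAlgebra.of ℤ H h' - 1) = r' * (MonoidAlgebra.of ℤ H h - 1) := by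
    apply IsFractionRing.injective (MonoidAlgebra ℤ H) (FractionRing (MonoidAlgebra ℤ H))
    rw [map_mul, map_mul, hr, hr']
    ring
  have := congrArg φ key
  rw [map_mul, map_mul, map_sub, map_sub, map_one] at this
  exact this
end

section
/- Let n ≥ 1, let C_n = ⟨t⟩ be the cyclic group of order n, and work in ℚ[C_n]. Set σ = n⁻¹ Σ_{j=0}^{n−1} t^j and x = (2n)⁻¹ Σ_{j=0}^{n−1} (2j + 1 − n) t^j. Then x · (t − 1) = 1 − σ, and σ is idempotent with σ(t−1) = 0; in particular x is the reduced inverse of t − 1: in every field summand of ℚ[C_n] on which t − 1 projects to a nonzero element, x projects to its inverse, and x projects to 0 on the augmentation summand. -/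
/-!
With `S = ∑_{j<n} t^j` and `t^n = 1`, one has `S t = S`; hence `σ (t - 1) = 0` and `S² = n S`.
Telescoping gives `(∑_{j<n} j t^j)(t - 1) = n t^n - S t = n - S`, and since
`2n x = 2 ∑_{j<n} j t^j + (1 - n) S`, this yields `2n x (t - 1) = 2n - 2S`, i.e. `x (t - 1) = 1 - σ`.
-/

open Finset

section

variable {K A : Type*} [Field K] [Ring A] [Algebra K A]

theorem sum_range_nsmul_pow_mul_sub_one (u : A) (n : ℕ) :
    (∑ i ∈ range n, i • u ^ i) * (u - 1) = n • u ^ n - ∑ i ∈ range n, u ^ (i + 1) := by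
  induction n with
  | zero => simp
  | succ n ih =>
    rw [sum_range_succ, add_mul, ih, sum_range_succ, smul_mul_assoc, mul_sub, ← pow_succ, mul_one,
      smul_sub, succ_nsmul]
    abel

theorem geom_sum_mul_of_pow_eq_one {u : A} {n : ℕ} (hu : u ^ n = 1) :
    (∑ i ∈ range n, u ^ i) * u = ∑ i ∈ range n, u ^ i := by
  rw [← sub_eq_zero, ← mul_sub_one, geom_sum_mul, hu, sub_self]

theorem geom_sum_mul_pow_of_pow_eq_one {u : A} {n : ℕ} (hu : u ^ n = 1) (k : ℕ) :
    (∑ i ∈ range n, u ^ i) * u ^ k = ∑ i ∈ range n, u ^ i := by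
  induction k with
  | zero => rw [pow_zero, mul_one]
  | succ k ih => rw [pow_succ, ← mul_assoc, ih, geom_sum_mul_of_pow_eq_one hu]

variable (K) in
noncomputable def powAverage (u : A) (n : ℕ) : A :=
  (n : K)⁻¹ • ∑ i ∈ range n, u ^ i

variable (K) in
noncomputable def subOneReducedInv (u : A) (n : ℕ) : A :=
  (2 * n : K)⁻¹ • ∑ i ∈ range n, (2 * (i : K) + 1 - n) • u ^ i

variable {u : A} {n : ℕ}

theorem powAverage_mul_sub_one (hu : u ^ n = 1) : powAverage K u n * (u - 1) = 0 := by
  rw [powAverage, smul_mul_assoc, geom_sum_mul, hu, sub_self, smul_zero]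

theorem powAverage_mul_self (hu : u ^ n = 1) (hn : (n : K) ≠ 0) :
    powAverage K u n * powAverage K u n = powAverage K u n := by
  have hSS : (∑ i ∈ range n, u ^ i) * ∑ i ∈ range n, u ^ i = n • ∑ i ∈ range n, u ^ i := by
    simp only [mul_sum, geom_sum_mul_pow_of_pow_eq_one hu, sum_const, card_range]
  rw [powAverage, smul_mul_smul, hSS, ← Nat.cast_smul_eq_nsmul K, smul_smul, mul_assoc,
    inv_mul_cancel₀ hn, mul_one]

theorem subOneReducedInv_mul_sub_one (hu : u ^ n = 1) (hn : (2 * n : K) ≠ 0) :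
    subOneReducedInv K u n * (u - 1) = 1 - powAverage K u n := by
  have hshift : ∑ i ∈ range n, u ^ (i + 1) = ∑ i ∈ range n, u ^ i := by
    simp only [pow_succ, ← sum_mul]
    exact geom_sum_mul_of_pow_eq_one hu
  have hsplit : ∑ i ∈ range n, (2 * (i : K) + 1 - n) • u ^ i
      = (2 : K) • ∑ i ∈ range n, i • u ^ i + (1 - n : K) • ∑ i ∈ range n, u ^ i := by
    simp only [smul_sum, ← Nat.cast_smul_eq_nsmul K, smul_smul, ← sum_add_distrib, ← add_smul]
    congr! 2; ring
  have hkey : (∑ i ∈ range n, (2 * (i : K) + 1 - n) • u ^ i) * (u - 1)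
      = (2 * n : K) • 1 - (2 : K) • ∑ i ∈ range n, u ^ i := by
    rw [hsplit, add_mul, smul_mul_assoc, smul_mul_assoc, sum_range_nsmul_pow_mul_sub_one,
      geom_sum_mul, hu, hshift, sub_self, smul_zero, add_zero, ← Nat.cast_smul_eq_nsmul K]
    module
  rw [subOneReducedInv, powAverage, smul_mul_assoc, hkey, smul_sub, smul_smul, smul_smul,
    inv_mul_cancel₀ hn, one_smul]
  have h2 : (2 : K) ≠ 0 := left_ne_zero_of_mul hn
  have hn' : (n : K) ≠ 0 := right_ne_zero_of_mul hn
  congr 2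
  field_simp

end

/-- The reduced inverse of `t - 1` for `t` of order `n`: with
`σ = n⁻¹ ∑_{j<n} t^j` and `x = (2n)⁻¹ ∑_{j<n} (2j+1-n) t^j` in `ℚ[C_n]`, one has
`x (t - 1) = 1 - σ`, `σ` is idempotent, and `σ (t - 1) = 0`. -/
theorem reduced_inverse_of_cyclic (n : ℕ) (hn : 1 ≤ n) :
    letI of := MonoidAlgebra.of ℚ (Multiplicative (ZMod n))
    letI t : Multiplicative (ZMod n) := Multiplicative.ofAdd 1
    letI σ : MonoidAlgebra ℚ (Multiplicative (ZMod n)) :=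
      (n : ℚ)⁻¹ • ∑ j ∈ Finset.range n, of (t ^ j)
    letI x : MonoidAlgebra ℚ (Multiplicative (ZMod n)) :=
      (2 * n : ℚ)⁻¹ • ∑ j ∈ Finset.range n, (2 * (j : ℚ) + 1 - n) • of (t ^ j)
    x * (of t - 1) = 1 - σ ∧ σ * σ = σ ∧ σ * (of t - 1) = 0 := by
  have hu : MonoidAlgebra.of ℚ _ (Multiplicative.ofAdd (1 : ZMod n)) ^ n = 1 := by
    rw [← map_pow, ← ofAdd_nsmul, nsmul_one, ZMod.natCast_self, ofAdd_zero, map_one]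
  have hn0 : (n : ℚ) ≠ 0 := Nat.cast_ne_zero.mpr (Nat.one_le_iff_ne_zero.mp hn)
  simp only [map_pow]
  exact ⟨subOneReducedInv_mul_sub_one hu (mul_ne_zero two_ne_zero hn0), powAverage_mul_self hu hn0,
    powAverage_mul_sub_one hu⟩
end
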